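/- With S and ℓ as above, S(κ) = 0, and for all u > κ, S(u) = 2·∫_κ^u log ℓ(s) ds. -/

import Mathlib

noncomputable def arcosh (x : ℝ) : ℝ := Real.log (x + Real.sqrt (x^2 - 1))

noncomputable def kappa : ℝ := arcosh (3/2) / 2

noncomputable def phi (ξ : ℝ) : ℝ := arcosh (Real.cosh (2*ξ) - 1/2)

noncomputable def ell (u : ℝ) : ℝ :=
  Real.cosh (4*u) - Real.cosh (2*u) - 1 +
    Real.sinh (2*u) * Real.sqrt ((2*Real.cosh (2*u)+1) * (2*Real.cosh (2*u)-3))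

noncomputable def Li2 (z : ℝ) : ℝ := ∑' n : ℕ, z^n / (n:ℝ)^2

noncomputable def Sfun (u : ℝ) : ℝ :=
  Li2 (Real.exp (-phi u - 2*u)) - Li2 (Real.exp (phi u - 2*u)) + 2*u*(phi u)

open Real Set

/-! ### Derivative of the dilogarithm -/

lemma li2_hasDerivAt {z : ℝ} (h0 : 0 < z) (h1 : z < 1) :
    HasDerivAt Li2 (-Real.log (1 - z) / z) z := by
  set r : ℝ := (1 + z) / 2 with hr
  have hr0 : 0 < r := by simp only [hr]; linarith
  have hr1 : r < 1 := by simp only [hr]; linarith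
  have hzr : z < r := by simp only [hr]; linarith
  have hu : Summable (fun n : ℕ => (n : ℝ) * r ^ (n - 1) / (n:ℝ)^2) := by
    refine Summable.of_nonneg_of_le (fun n => by positivity) (fun n => ?_)
      (((summable_geometric_of_lt_one hr0.le hr1)).mul_left (1/r))
    match n with
    | 0 => simp; positivity
    | (m+1) =>
      have h2 : ((m:ℝ)+1) * r ^ m / ((m:ℝ)+1)^2 = r ^ m / ((m:ℝ)+1) := by
        field_simp
      have h4 : 1/r * r^(m+1) = r ^ m := by
        rw [pow_succ]; field_simp
      push_cast
      rw [h2, h4]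
      apply div_le_self (by positivity) (by push_cast; linarith)
  have hderiv : ∀ (n : ℕ) (y : ℝ), y ∈ Ioo (-r) r →
      HasDerivAt (fun x : ℝ => x ^ n / (n:ℝ)^2) ((n:ℝ) * y ^ (n-1) / (n:ℝ)^2) y :=
    fun n y _ => (hasDerivAt_pow n y).div_const _
  have hbound : ∀ (n : ℕ) (y : ℝ), y ∈ Ioo (-r) r →
      ‖(n:ℝ) * y ^ (n-1) / (n:ℝ)^2‖ ≤ (n : ℝ) * r ^ (n - 1) / (n:ℝ)^2 := by
    intro n y hy
    have hyr : |y| ≤ r := by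
      rw [abs_le]; exact ⟨hy.1.le, hy.2.le⟩
    have hnorm : ‖(n:ℝ) * y ^ (n-1) / (n:ℝ)^2‖ = (n:ℝ) * |y| ^ (n-1) / (n:ℝ)^2 := by
      simp [Real.norm_eq_abs, abs_div, abs_mul, abs_pow, Nat.abs_cast, sq_abs]
    rw [hnorm]
    gcongr <;> first
      | positivity
      | exact abs_nonneg y
      | exact hyr
  have hsum0 : Summable (fun n : ℕ => (0:ℝ) ^ n / (n:ℝ)^2) := by
    have h3 : (fun n : ℕ => (0:ℝ) ^ n / (n:ℝ)^2) = fun _ => (0:ℝ) := by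
      funext n
      match n with
      | 0 => norm_num
      | (m+1) => simp
    rw [h3]; exact summable_zero
  have main := hasDerivAt_tsum_of_isPreconnected hu (isOpen_Ioo (a := -r) (b := r))
    (isPreconnected_Ioo) hderiv hbound (y₀ := 0) ⟨by linarith, hr0⟩ hsum0
    (y := z) ⟨by linarith, hzr⟩
  have hsumval : (∑' n : ℕ, (n:ℝ) * z ^ (n-1) / (n:ℝ)^2) = -Real.log (1 - z) / z := by
    have H := Real.hasSum_pow_div_log_of_abs_lt_one
      (x := z) (by rw [abs_of_pos h0]; exact h1)
    have H2 := H.div_const z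
    have Heq : (fun n : ℕ => z ^ (n+1) / ((n:ℝ)+1) / z)
        = fun n : ℕ => ((n+1:ℕ):ℝ) * z ^ ((n+1) - 1) / ((n+1:ℕ):ℝ)^2 := by
      funext n
      push_cast
      field_simp
      ring
    rw [Heq] at H2
    have H3 := (hasSum_nat_add_iff' (f := fun n : ℕ => (n:ℝ) * z ^ (n-1) / (n:ℝ)^2)
      (g := -Real.log (1 - z) / z) 1).mp ?_
    · exact H3.tsum_eq
    · have hz0 : (∑ i ∈ Finset.range 1, (i:ℝ) * z ^ (i - 1) / (i:ℝ)^2) = 0 := by norm_num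
      rw [hz0, sub_zero]
      exact H2
  rw [← hsumval]
  exact main

/-! ### arcosh facts -/

lemma exp_arcosh {x : ℝ} (hx : 1 ≤ x) : Real.exp (_root_.arcosh x) = x + Real.sqrt (x^2-1) := by
  have h2 : 0 < x + Real.sqrt (x^2-1) := by
    have := Real.sqrt_nonneg (x^2-1); linarith
  exact Real.exp_log h2

lemma cosh_arcosh {x : ℝ} (hx : 1 ≤ x) : Real.cosh (_root_.arcosh x) = x := by
  have h1 : (0:ℝ) ≤ x^2 - 1 := by nlinarith
  have hs := Real.sq_sqrt h1
  have hsn := Real.sqrt_nonneg (x^2-1)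
  have h2 : 0 < x + Real.sqrt (x^2-1) := by linarith
  rw [Real.cosh_eq, Real.exp_neg, _root_.exp_arcosh hx]
  field_simp
  nlinarith [hs]

lemma cosh_two_kappa : Real.cosh (2 * kappa) = 3/2 := by
  unfold kappa
  rw [show 2 * (_root_.arcosh (3/2)/2) = _root_.arcosh (3/2) by ring]
  exact _root_.cosh_arcosh (by norm_num)

lemma kappa_pos : 0 < kappa := by
  unfold kappa _root_.arcosh
  have h1 : (1:ℝ) < 3/2 + Real.sqrt ((3/2)^2 - 1) := by
    have := Real.sqrt_nonneg ((3/2:ℝ)^2 - 1); linarith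
  exact div_pos (Real.log_pos h1) two_pos

lemma phi_kappa : phi kappa = 0 := by
  unfold phi
  rw [cosh_two_kappa]
  norm_num [_root_.arcosh]

lemma arcosh_hasDerivAt {x : ℝ} (hx : 1 < x) :
    HasDerivAt _root_.arcosh (1 / Real.sqrt (x^2 - 1)) x := by
  have h1 : (0:ℝ) < x^2 - 1 := by nlinarith
  have hs0 : 0 < Real.sqrt (x^2-1) := Real.sqrt_pos.mpr h1
  have hs2 : Real.sqrt (x^2-1)^2 = x^2-1 := Real.sq_sqrt h1.le
  have d1 : HasDerivAt (fun y : ℝ => y^2 - 1) (2*x) x := by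
    simpa using (hasDerivAt_pow 2 x).sub_const 1
  have d2 : HasDerivAt (fun y : ℝ => Real.sqrt (y^2-1))
      (1/(2*Real.sqrt (x^2-1)) * (2*x)) x :=
    (Real.hasDerivAt_sqrt h1.ne').comp x d1
  have d3 : HasDerivAt (fun y : ℝ => y + Real.sqrt (y^2-1))
      (1 + 1/(2*Real.sqrt (x^2-1)) * (2*x)) x := (hasDerivAt_id x).add d2
  have hpos : 0 < x + Real.sqrt (x^2-1) := by linarith
  have d4 := (Real.hasDerivAt_log hpos.ne').comp x d3
  have d5 : HasDerivAt _root_.arcosh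
      ((x + Real.sqrt (x^2-1))⁻¹ * (1 + 1/(2*Real.sqrt (x^2-1)) * (2*x))) x := d4
  convert d5 using 1
  field_simp
  nlinarith [hs2, hs0]

lemma phi_hasDerivAt {u : ℝ} (h : 1 < Real.cosh (2*u) - 1/2) :
    HasDerivAt phi
      (1 / Real.sqrt ((Real.cosh (2*u) - 1/2)^2 - 1) * (2 * Real.sinh (2*u))) u := by
  have h1 : HasDerivAt (fun u : ℝ => 2*u) 2 u := by
    simpa using (hasDerivAt_id u).const_mul 2
  have dc : HasDerivAt (fun u : ℝ => Real.cosh (2*u) - 1/2) (2 * Real.sinh (2*u)) u := by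
    have := ((Real.hasDerivAt_cosh (2*u)).comp u h1).sub_const (1/2)
    rw [mul_comm]
    exact this
  exact (arcosh_hasDerivAt h).comp u dc

/-! ### key algebraic identities -/

lemma key1 {c sh s : ℝ} (hs2 : s^2 = (c-1/2)^2 - 1) (hsh2 : sh^2 = c^2 - 1) :
    (1 - ((c-1/2) - s)*(c - sh)) * (1 - ((c-1/2) + s)*(c - sh)) = c - sh := by
  linear_combination hsh2 - (c - sh)^2 * hs2

lemma key2 {c sh s : ℝ} (hs2 : s^2 = (c-1/2)^2 - 1) (hsh2 : sh^2 = c^2 - 1) :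
    (1 - ((c-1/2) - s)*(c - sh)) * ((c-1/2) + s)
      = (2*c^2 - c - 2 + 2*sh*s) * (1 - ((c-1/2) + s)*(c - sh)) := by
  linear_combination (c - sh + 2*c*sh - 2*c^2 + 2 - 2*(sh^2 - (c^2-1))) * hs2
    + (-(2*c-1)*s - 2*c^2 + 2*c + 3/2) * hsh2

/-! ### basic estimates -/

lemma cosh_ge {s : ℝ} (h : kappa ≤ s) : 3/2 ≤ Real.cosh (2*s) := by
  rw [← cosh_two_kappa]
  apply Real.cosh_le_cosh.mpr
  have h0 := kappa_pos
  rw [abs_of_pos (by linarith), abs_of_pos (by linarith)]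
  linarith

lemma cosh_gt {u : ℝ} (h : kappa < u) : 3/2 < Real.cosh (2*u) := by
  rw [← cosh_two_kappa]
  apply Real.cosh_lt_cosh.mpr
  have h0 := kappa_pos
  rw [abs_of_pos (by linarith), abs_of_pos (by linarith)]
  linarith

lemma phi_nonneg {s : ℝ} (h : kappa ≤ s) : 0 ≤ phi s := by
  have hc := cosh_ge h
  unfold phi _root_.arcosh
  apply Real.log_nonneg
  have := Real.sqrt_nonneg ((Real.cosh (2*s) - 1/2)^2 - 1)
  linarith

lemma sinh_sqrt {s : ℝ} (h : 0 ≤ s) :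
    Real.sqrt (Real.cosh (2*s)^2 - 1) = Real.sinh (2*s) := by
  have hsh0 : 0 ≤ Real.sinh (2*s) := Real.sinh_nonneg_iff.mpr (by linarith)
  rw [show Real.cosh (2*s)^2 - 1 = Real.sinh (2*s)^2 from by
    have := Real.cosh_sq (2*s); linarith, Real.sqrt_sq hsh0]

lemma phi_lt_two_mul {s : ℝ} (h : kappa ≤ s) : phi s < 2*s := by
  have hs0 : 0 < s := lt_of_lt_of_le kappa_pos h
  have hc : 3/2 ≤ Real.cosh (2*s) := cosh_ge h
  have hy1 : 1 ≤ Real.cosh (2*s) - 1/2 := by linarith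
  have hle : Real.sqrt ((Real.cosh (2*s)-1/2)^2 - 1) ≤ Real.sinh (2*s) := by
    rw [← sinh_sqrt hs0.le]
    exact Real.sqrt_le_sqrt (by nlinarith)
  apply Real.exp_lt_exp.mp
  have h1 : Real.exp (phi s)
      = (Real.cosh (2*s) - 1/2) + Real.sqrt ((Real.cosh (2*s)-1/2)^2 - 1) := by
    unfold phi; exact _root_.exp_arcosh hy1
  rw [h1, ← Real.cosh_add_sinh (2*s)]
  linarith

lemma ell_pos {s : ℝ} (h : kappa ≤ s) : 0 < ell s := by
  have hs0 : 0 < s := lt_of_lt_of_le kappa_pos h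
  have hc : 3/2 ≤ Real.cosh (2*s) := cosh_ge h
  have h4u : Real.cosh (4*s) = 2*Real.cosh (2*s)^2 - 1 := by
    rw [show (4:ℝ)*s = 2*(2*s) by ring, Real.cosh_two_mul]
    have := Real.cosh_sq (2*s); linarith
  have hsh0 : 0 ≤ Real.sinh (2*s) := Real.sinh_nonneg_iff.mpr (by linarith)
  have hsq0 : 0 ≤ Real.sqrt ((2*Real.cosh (2*s)+1) * (2*Real.cosh (2*s)-3)) :=
    Real.sqrt_nonneg _
  unfold ell
  rw [h4u]
  nlinarith [mul_nonneg hsh0 hsq0]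

/-! ### derivative of Sfun -/

lemma sfun_hasDerivAt {u : ℝ} (hu : kappa < u) :
    HasDerivAt Sfun (2 * Real.log (ell u)) u := by
  have hu0 : 0 < u := kappa_pos.trans hu
  have hc : 3/2 < Real.cosh (2*u) := cosh_gt hu
  have hy1 : 1 < Real.cosh (2*u) - 1/2 := by linarith
  have hy2 : (0:ℝ) < (Real.cosh (2*u) - 1/2)^2 - 1 := by nlinarith
  have hs0 : 0 < Real.sqrt ((Real.cosh (2*u) - 1/2)^2 - 1) := Real.sqrt_pos.mpr hy2
  have hs2 : Real.sqrt ((Real.cosh (2*u) - 1/2)^2 - 1) ^ 2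
      = (Real.cosh (2*u) - 1/2)^2 - 1 := Real.sq_sqrt hy2.le
  have hsh0 : 0 < Real.sinh (2*u) := Real.sinh_pos_iff.mpr (by linarith)
  have hsh2 : Real.sinh (2*u)^2 = Real.cosh (2*u)^2 - 1 := by
    have := Real.cosh_sq (2*u); linarith
  have hssh : Real.sqrt ((Real.cosh (2*u) - 1/2)^2 - 1) < Real.sinh (2*u) := by
    nlinarith
  have hEphi : Real.exp (phi u)
      = (Real.cosh (2*u) - 1/2) + Real.sqrt ((Real.cosh (2*u) - 1/2)^2 - 1) := by
    unfold phi; exact _root_.exp_arcosh hy1.le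
  have hEnegphi : Real.exp (-phi u)
      = (Real.cosh (2*u) - 1/2) - Real.sqrt ((Real.cosh (2*u) - 1/2)^2 - 1) := by
    rw [Real.exp_neg, hEphi]
    apply inv_eq_of_mul_eq_one_right
    linear_combination -hs2
  have hT : Real.exp (-(2*u)) = Real.cosh (2*u) - Real.sinh (2*u) :=
    (Real.cosh_sub_sinh (2*u)).symm
  have hE2 : Real.exp (2*u) = Real.cosh (2*u) + Real.sinh (2*u) :=
    (Real.cosh_add_sinh (2*u)).symm
  have haval : Real.exp (-phi u - 2*u)
      = ((Real.cosh (2*u) - 1/2) - Real.sqrt ((Real.cosh (2*u) - 1/2)^2 - 1))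
        * (Real.cosh (2*u) - Real.sinh (2*u)) := by
    rw [show -phi u - 2*u = -phi u + -(2*u) by ring, Real.exp_add, hEnegphi, hT]
  have hbval : Real.exp (phi u - 2*u)
      = ((Real.cosh (2*u) - 1/2) + Real.sqrt ((Real.cosh (2*u) - 1/2)^2 - 1))
        * (Real.cosh (2*u) - Real.sinh (2*u)) := by
    rw [show phi u - 2*u = phi u + -(2*u) by ring, Real.exp_add, hEphi, hT]
  have ha0 : 0 < Real.exp (-phi u - 2*u) := Real.exp_pos _
  have hb0 : 0 < Real.exp (phi u - 2*u) := Real.exp_pos _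
  have ha1 : Real.exp (-phi u - 2*u) < 1 := by
    apply Real.exp_lt_one_iff.mpr
    have := phi_nonneg hu.le
    linarith
  have hb1 : Real.exp (phi u - 2*u) < 1 := by
    apply Real.exp_lt_one_iff.mpr
    have := phi_lt_two_mul hu.le
    linarith
  have h1a : 0 < 1 - Real.exp (-phi u - 2*u) := by linarith
  have h1b : 0 < 1 - Real.exp (phi u - 2*u) := by linarith
  -- derivatives
  have phiD := phi_hasDerivAt hy1
  obtain ⟨D, hDdef⟩ : ∃ D : ℝ,
      D = 1 / Real.sqrt ((Real.cosh (2*u) - 1/2)^2 - 1) * (2 * Real.sinh (2*u)) :=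
    ⟨_, rfl⟩
  rw [← hDdef] at phiD
  have h2u : HasDerivAt (fun v : ℝ => 2*v) 2 u := by
    simpa using (hasDerivAt_id u).const_mul 2
  have dA : HasDerivAt (fun v => Real.exp (-phi v - 2*v))
      (Real.exp (-phi u - 2*u) * (-D - 2)) u := ((phiD.neg).sub h2u).exp
  have dB : HasDerivAt (fun v => Real.exp (phi v - 2*v))
      (Real.exp (phi u - 2*u) * (D - 2)) u := (phiD.sub h2u).exp
  have dLa := (li2_hasDerivAt ha0 ha1).comp u dA
  have dLb := (li2_hasDerivAt hb0 hb1).comp u dB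
  have dW : HasDerivAt (fun v : ℝ => 2*v*(phi v)) (2 * phi u + 2*u*D) u := h2u.mul phiD
  have total : HasDerivAt Sfun
      (-Real.log (1 - Real.exp (-phi u - 2*u)) / Real.exp (-phi u - 2*u)
          * (Real.exp (-phi u - 2*u) * (-D - 2))
        - -Real.log (1 - Real.exp (phi u - 2*u)) / Real.exp (phi u - 2*u)
          * (Real.exp (phi u - 2*u) * (D - 2))
        + (2 * phi u + 2*u*D)) u := (dLa.sub dLb).add dW
  -- the two log identities
  have hab : (1 - Real.exp (-phi u - 2*u)) * (1 - Real.exp (phi u - 2*u))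
      = Real.exp (-(2*u)) := by
    rw [haval, hbval, hT]
    exact key1 hs2 hsh2
  have hA : Real.log (1 - Real.exp (-phi u - 2*u))
      + Real.log (1 - Real.exp (phi u - 2*u)) = -(2*u) := by
    rw [← Real.log_mul h1a.ne' h1b.ne', hab, Real.log_exp]
  have hell : ell u = 2*Real.cosh (2*u)^2 - Real.cosh (2*u) - 2
      + 2*Real.sinh (2*u)*Real.sqrt ((Real.cosh (2*u) - 1/2)^2 - 1) := by
    have h4u : Real.cosh (4*u) = 2*Real.cosh (2*u)^2 - 1 := by
      rw [show (4:ℝ)*u = 2*(2*u) by ring, Real.cosh_two_mul]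
      have := Real.cosh_sq (2*u); linarith
    have hsqrt4 : Real.sqrt 4 = 2 := by
      rw [show (4:ℝ) = 2^2 by norm_num, Real.sqrt_sq (by norm_num : (0:ℝ) ≤ 2)]
    have hsq : Real.sqrt ((2*Real.cosh (2*u)+1) * (2*Real.cosh (2*u)-3))
        = 2*Real.sqrt ((Real.cosh (2*u)-1/2)^2-1) := by
      rw [show (2*Real.cosh (2*u)+1) * (2*Real.cosh (2*u)-3)
          = 4*((Real.cosh (2*u)-1/2)^2-1) by ring,
        Real.sqrt_mul (by norm_num : (0:ℝ) ≤ 4), hsqrt4]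
    unfold ell
    rw [h4u, hsq]
    ring
  have hB2 : (1 - Real.exp (-phi u - 2*u))
        * ((Real.cosh (2*u) - 1/2) + Real.sqrt ((Real.cosh (2*u) - 1/2)^2 - 1))
      = ell u * (1 - Real.exp (phi u - 2*u)) := by
    rw [haval, hbval, hell]
    exact key2 hs2 hsh2
  have hys : 0 < (Real.cosh (2*u) - 1/2) + Real.sqrt ((Real.cosh (2*u) - 1/2)^2 - 1) := by
    linarith
  have hellpos : 0 < ell u := ell_pos hu.le
  have hBlog : Real.log (1 - Real.exp (-phi u - 2*u)) + phi u
      = Real.log (ell u) + Real.log (1 - Real.exp (phi u - 2*u)) := by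
    have h1 := congrArg Real.log hB2
    rw [Real.log_mul h1a.ne' hys.ne', Real.log_mul hellpos.ne' h1b.ne'] at h1
    rwa [show Real.log ((Real.cosh (2*u) - 1/2)
        + Real.sqrt ((Real.cosh (2*u) - 1/2)^2 - 1)) = phi u from by
      rw [← hEphi, Real.log_exp]] at h1
  -- final computation
  have e1 : -Real.log (1 - Real.exp (-phi u - 2*u)) / Real.exp (-phi u - 2*u)
      * (Real.exp (-phi u - 2*u) * (-D - 2))
      = Real.log (1 - Real.exp (-phi u - 2*u)) * (D + 2) := by
    field_simp
    ring
  have e2 : -Real.log (1 - Real.exp (phi u - 2*u)) / Real.exp (phi u - 2*u)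
      * (Real.exp (phi u - 2*u) * (D - 2))
      = -(Real.log (1 - Real.exp (phi u - 2*u)) * (D - 2)) := by
    field_simp
  have hfinal : -Real.log (1 - Real.exp (-phi u - 2*u)) / Real.exp (-phi u - 2*u)
          * (Real.exp (-phi u - 2*u) * (-D - 2))
        - -Real.log (1 - Real.exp (phi u - 2*u)) / Real.exp (phi u - 2*u)
          * (Real.exp (phi u - 2*u) * (D - 2))
        + (2 * phi u + 2*u*D) = 2 * Real.log (ell u) := by
    rw [e1, e2]
    linear_combination D * hA + 2 * hBlog
  rw [← hfinal]
  exact total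

/-! ### continuity -/

lemma phi_continuousOn : ContinuousOn phi (Ici kappa) := by
  have hg : Continuous (fun s : ℝ => (Real.cosh (2*s) - 1/2)
      + Real.sqrt ((Real.cosh (2*s) - 1/2)^2 - 1)) := by
    fun_prop
  have h : ContinuousOn (fun s : ℝ => Real.log ((Real.cosh (2*s) - 1/2)
      + Real.sqrt ((Real.cosh (2*s) - 1/2)^2 - 1))) (Ici kappa) := by
    apply ContinuousOn.log hg.continuousOn
    intro s hs
    have hc := cosh_ge hs
    have := Real.sqrt_nonneg ((Real.cosh (2*s) - 1/2)^2 - 1)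
    intro hzero
    linarith
  unfold phi _root_.arcosh
  exact h

lemma sfun_continuousOn : ContinuousOn Sfun (Ici kappa) := by
  have h2v : Continuous (fun v : ℝ => 2*v) := by fun_prop
  have hA : ContinuousOn (fun v => Real.exp (-phi v - 2*v)) (Ici kappa) :=
    Real.continuous_exp.comp_continuousOn
      ((phi_continuousOn.neg).sub h2v.continuousOn)
  have hB : ContinuousOn (fun v => Real.exp (phi v - 2*v)) (Ici kappa) :=
    Real.continuous_exp.comp_continuousOn
      (phi_continuousOn.sub h2v.continuousOn)
  have hLa : ContinuousOn (fun v => Li2 (Real.exp (-phi v - 2*v))) (Ici kappa) := by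
    intro s hs
    have hs0 : 0 < s := lt_of_lt_of_le kappa_pos hs
    have hz0 : 0 < Real.exp (-phi s - 2*s) := Real.exp_pos _
    have hz1 : Real.exp (-phi s - 2*s) < 1 := by
      apply Real.exp_lt_one_iff.mpr
      have := phi_nonneg hs
      linarith
    have h5 := ContinuousAt.comp_continuousWithinAt
      (f := fun v => Real.exp (-phi v - 2*v)) (x := s)
      (li2_hasDerivAt hz0 hz1).continuousAt (hA s hs)
    exact h5
  have hLb : ContinuousOn (fun v => Li2 (Real.exp (phi v - 2*v))) (Ici kappa) := by
    intro s hs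
    have hz0 : 0 < Real.exp (phi s - 2*s) := Real.exp_pos _
    have hz1 : Real.exp (phi s - 2*s) < 1 := by
      apply Real.exp_lt_one_iff.mpr
      have := phi_lt_two_mul hs
      linarith
    have h5 := ContinuousAt.comp_continuousWithinAt
      (f := fun v => Real.exp (phi v - 2*v)) (x := s)
      (li2_hasDerivAt hz0 hz1).continuousAt (hB s hs)
    exact h5
  have hW : ContinuousOn (fun v : ℝ => 2*v*(phi v)) (Ici kappa) :=
    h2v.continuousOn.mul phi_continuousOn
  have hfin := (hLa.sub hLb).add hW
  unfold Sfun
  exact hfin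

lemma sfun_kappa : Sfun kappa = 0 := by
  unfold Sfun
  rw [phi_kappa]
  rw [show -(0:ℝ) - 2*kappa = 0 - 2*kappa by ring]
  ring

theorem stmt16 :
    Sfun kappa = 0 ∧
    ∀ u : ℝ, kappa < u → Sfun u = 2 * ∫ s in kappa..u, Real.log (ell s) := by
  refine ⟨sfun_kappa, fun u hu => ?_⟩
  have hle := hu.le
  have hcont : ContinuousOn Sfun (Icc kappa u) :=
    sfun_continuousOn.mono (Icc_subset_Ici_self)
  have hderiv : ∀ x ∈ Ioo kappa u,
      HasDerivWithinAt Sfun (2 * Real.log (ell x)) (Ioi x) x :=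
    fun x hx => (sfun_hasDerivAt hx.1).hasDerivWithinAt
  have hint : IntervalIntegrable (fun s => 2 * Real.log (ell s))
      MeasureTheory.volume kappa u := by
    apply ContinuousOn.intervalIntegrable
    rw [uIcc_of_le hle]
    have hellcont : Continuous ell := by unfold ell; fun_prop
    intro s hs
    have hpos : 0 < ell s := ell_pos hs.1
    exact (continuousAt_const.mul
      ((Real.continuousAt_log hpos.ne').comp hellcont.continuousAt)).continuousWithinAt
  have hFTC := intervalIntegral.integral_eq_sub_of_hasDeriv_right_of_le hle hcont
    hderiv hint
  rw [sfun_kappa, sub_zero] at hFTC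
  rw [intervalIntegral.integral_const_mul] at hFTC
  exact hFTC.symm
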